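/- Let K be a field of characteristic zero and let V, U : ℕ → K be sequences with V_n ≠ 0 and U_n ≠ 0 for all n ≥ 1. Fix integers r, s ≥ 1 and elements g₁, g₂ ∈ K. Then the identity V_{r+s} = g₁·V_r + g₂·U_s holds if and only if the mixed-binomial recurrence M(r, s) = g₁·M(r−1, s) + g₂·M(r, s−1) holds, where M(r, s) denotes the V-mixed-U binomial coefficient. -/

import Mathlib

/-!
Removing the last factor from the numerator and from one denominator factorial gives
`V_{r+s} M(r-1, s) = V_r M(r, s)` and `V_{r+s} M(r, s-1) = U_s M(r, s)`. Multiplying the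
recurrence by the nonzero `V_{r+s}` therefore turns it into `M(r, s)` times the identity
`V_{r+s} = g₁ V_r + g₂ U_s`, and `M(r, s) ≠ 0`.
-/

/-- The `F`-factorial: `ffact F 0 = 1`, `ffact F n = F n * F (n-1) * ... * F 1`. -/
def ffact {K : Type*} [Field K] (F : ℕ → K) : ℕ → K
  | 0 => 1
  | n + 1 => F (n + 1) * ffact F n

/-- The `V`-mixed-`U` binomial coefficient `M(r, s) = V_{r+s}! / (V_r! * U_s!)`. -/
def mixedBinom {K : Type*} [Field K] (V U : ℕ → K) (r s : ℕ) : K :=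
  ffact V (r + s) / (ffact V r * ffact U s)

section

variable {K : Type*} [Field K]

theorem ffact_succ (F : ℕ → K) (n : ℕ) : ffact F (n + 1) = F (n + 1) * ffact F n := rfl

theorem ffact_ne_zero {F : ℕ → K} (hF : ∀ n, 1 ≤ n → F n ≠ 0) : ∀ n, ffact F n ≠ 0
  | 0 => one_ne_zero
  | n + 1 => mul_ne_zero (hF (n + 1) n.succ_pos) (ffact_ne_zero hF n)

variable {V U : ℕ → K}

theorem mixedBinom_ne_zero (hV : ∀ n, 1 ≤ n → V n ≠ 0) (hU : ∀ n, 1 ≤ n → U n ≠ 0)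
    (r s : ℕ) : mixedBinom V U r s ≠ 0 :=
  div_ne_zero (ffact_ne_zero hV _) (mul_ne_zero (ffact_ne_zero hV r) (ffact_ne_zero hU s))

theorem mixedBinom_succ_left_mul {r : ℕ} (hr : V (r + 1) ≠ 0) (s : ℕ) :
    mixedBinom V U (r + 1) s * V (r + 1) = V (r + 1 + s) * mixedBinom V U r s := by
  rw [mixedBinom, mixedBinom, Nat.add_right_comm, ffact_succ, ffact_succ, ← Nat.add_right_comm]
  field_simp

theorem mixedBinom_succ_right_mul (r : ℕ) {s : ℕ} (hs : U (s + 1) ≠ 0) :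
    mixedBinom V U r (s + 1) * U (s + 1) = V (r + (s + 1)) * mixedBinom V U r s := by
  rw [mixedBinom, mixedBinom, ← Nat.add_assoc, ffact_succ, ffact_succ U]
  field_simp

end

theorem stmt2_general {K : Type*} [Field K] (V U : ℕ → K)
    (hV : ∀ n, 1 ≤ n → V n ≠ 0) (hU : ∀ n, 1 ≤ n → U n ≠ 0)
    (r s : ℕ) (hr : 1 ≤ r) (hs : 1 ≤ s) (g₁ g₂ : K) :
    V (r + s) = g₁ * V r + g₂ * U s ↔
      mixedBinom V U r s =
        g₁ * mixedBinom V U (r - 1) s + g₂ * mixedBinom V U r (s - 1) := by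
  obtain ⟨a, rfl⟩ := Nat.exists_eq_add_of_le' hr
  obtain ⟨b, rfl⟩ := Nat.exists_eq_add_of_le' hs
  have hW : V (a + 1 + (b + 1)) ≠ 0 := hV _ (by omega)
  have hM := mixedBinom_ne_zero hV hU (a + 1) (b + 1)
  have hleft := mixedBinom_succ_left_mul (U := U) (hV (a + 1) a.succ_pos) (b + 1)
  have hright := mixedBinom_succ_right_mul (V := V) (a + 1) (hU (b + 1) b.succ_pos)
  simp only [Nat.add_sub_cancel]
  calc V (a + 1 + (b + 1)) = g₁ * V (a + 1) + g₂ * U (b + 1)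
      ↔ mixedBinom V U (a + 1) (b + 1) * V (a + 1 + (b + 1)) =
          mixedBinom V U (a + 1) (b + 1) * (g₁ * V (a + 1) + g₂ * U (b + 1)) :=
        (mul_right_inj' hM).symm
    _ ↔ V (a + 1 + (b + 1)) * mixedBinom V U (a + 1) (b + 1) = V (a + 1 + (b + 1)) *
          (g₁ * mixedBinom V U a (b + 1) + g₂ * mixedBinom V U (a + 1) b) := by
        rw [mul_add, mul_left_comm _ g₁, mul_left_comm _ g₂, hleft, hright]
        constructor <;> intro h <;> linear_combination h
    _ ↔ _ := mul_right_inj' hW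

theorem stmt2 {K : Type*} [Field K] [CharZero K] (V U : ℕ → K)
    (hV : ∀ n, 1 ≤ n → V n ≠ 0) (hU : ∀ n, 1 ≤ n → U n ≠ 0)
    (r s : ℕ) (hr : 1 ≤ r) (hs : 1 ≤ s) (g₁ g₂ : K) :
    V (r + s) = g₁ * V r + g₂ * U s ↔
      mixedBinom V U r s =
        g₁ * mixedBinom V U (r - 1) s + g₂ * mixedBinom V U r (s - 1) :=
  stmt2_general V U hV hU r s hr hs g₁ g₂
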